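/- The full subcategory S5dlubpo of Dlubpo consisting of all dlubpos satisfying axiom S5 for directed sets is cartesian closed, with terminal object the one-point dlubpo, products D × E with componentwise structure, and exponents the general function dlubpos D ⇒* E. -/

import Mathlib

universe u

/-- A set is directed: non-empty and upward directed. -/
def Dir {α : Type u} [Preorder α] (A : Set α) : Prop :=
  A.Nonempty ∧ DirectedOn (· ≤ ·) A

/-- The data of a directed-lub partial order: a partial order together with a
convergence relation designating natural lubs of (directed) subsets. -/
structure PreDlubpo : Type (u + 1) where
  carrier : Type u
  [po : PartialOrder carrier]
  conv : Set carrier → carrier → Prop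

attribute [instance] PreDlubpo.po

/-- The dlubpo axioms: natural sets are directed with the designated element as
lub, and the singleton axiom S3 holds. -/
def IsDlubpo (D : PreDlubpo.{u}) : Prop :=
  (∀ (A : Set D.carrier) (a : D.carrier), D.conv A a → Dir A ∧ IsLUB A a) ∧
  ∀ a : D.carrier, D.conv {a} a

/-- Axiom S5 for directed sets. -/
def S5ax (D : PreDlubpo.{u}) : Prop :=
  ∀ (X Y : Set D.carrier) (y : D.carrier), X ⊆ Y → Dir X → Dir Y → D.conv Y y →
    (∀ b ∈ Y, ∃ a ∈ X, b ≤ a) → D.conv X y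

/-- Continuous functions between dlubpos. -/
def Hom (D E : PreDlubpo.{u}) (f : D.carrier → E.carrier) : Prop :=
  Monotone f ∧ ∀ (A : Set D.carrier) (a : D.carrier), D.conv A a → E.conv (f '' A) (f a)

/-- The one-point dlubpo. -/
def termD : PreDlubpo.{u} where
  carrier := PUnit
  conv A a := A = {a}

/-- The product dlubpo, with componentwise order and convergence. -/
def prodD (D E : PreDlubpo.{u}) : PreDlubpo.{u} where
  carrier := D.carrier × E.carrier
  conv A p := Dir A ∧ D.conv (Prod.fst '' A) p.1 ∧ E.conv (Prod.snd '' A) p.2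

/-- The general function dlubpo `D ⇒* E`: continuous functions with pointwise
order; `F → f` iff `F` is directed and for all directed `A` with `π₁[A] = F`
and `π₂[A] → d`, `eval[A] → f d`. -/
def expoD (D E : PreDlubpo.{u}) : PreDlubpo.{u} where
  carrier := {f : D.carrier → E.carrier // Hom D E f}
  conv F f := Dir F ∧
    ∀ A : Set ({f : D.carrier → E.carrier // Hom D E f} × D.carrier),
      Dir A → Prod.fst '' A = F →
      ∀ d : D.carrier, D.conv (Prod.snd '' A) d →
        E.conv ((fun p => p.1.1 p.2) '' A) (f.1 d)

/-! Terminal object and products are componentwise, and S5 passes to a product through its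
projections. For the exponent, the lub of a natural set `F → f` is computed pointwise by
testing convergence on `F × {d}`. The real work is a transfer principle using S5 in `E`: for
directed `A ⊆ (D ⇒* E) × D` and a directed `Y ⊇ π₁[A]` that is cofinal in `π₁[A]`,
`eval[A] ⊆ eval[Y × π₂[A]]` is cofinal (as `A` is directed), so convergence of the larger set
passes to `eval[A]`. With `Y` the bigger set of an instance of S5 this gives S5 for `D ⇒* E`;
with `Y = π₁[A] = curry[S]` it gives continuity of currying, since
`eval[curry[S] × T] = f[S × T]`. -/

section Directed

variable {α β : Type u} [Preorder α] [Preorder β]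

lemma Dir.singleton (a : α) : Dir ({a} : Set α) :=
  ⟨Set.singleton_nonempty a, directedOn_singleton a⟩

lemma Dir.image {A : Set α} (hA : Dir A) {f : α → β} (hf : Monotone f) : Dir (f '' A) :=
  ⟨hA.1.image f, hA.2.mono_comp hf⟩

lemma Dir.prod {A : Set α} {B : Set β} (hA : Dir A) (hB : Dir B) : Dir (A ×ˢ B) :=
  ⟨hA.1.prod hB.1, hA.2.prod hB.2⟩

lemma IsCofinalFor.prod {s s' : Set α} {t t' : Set β} (hs : IsCofinalFor s s')
    (ht : IsCofinalFor t t') : IsCofinalFor (s ×ˢ t) (s' ×ˢ t') := by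
  rintro ⟨a, b⟩ ⟨ha, hb⟩
  obtain ⟨a', ha', haa'⟩ := hs ha
  obtain ⟨b', hb', hbb'⟩ := ht hb
  exact ⟨(a', b'), ⟨ha', hb'⟩, haa', hbb'⟩

end Directed

namespace IsDlubpo

variable {D : PreDlubpo.{u}} {A : Set D.carrier}

lemma dir {a : D.carrier} (hD : IsDlubpo D) (h : D.conv A a) : Dir A := (hD.1 A a h).1

lemma isLUB {a : D.carrier} (hD : IsDlubpo D) (h : D.conv A a) : IsLUB A a := (hD.1 A a h).2

lemma conv_singleton (hD : IsDlubpo D) (a : D.carrier) : D.conv {a} a := hD.2 a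

end IsDlubpo

lemma isDlubpo_termD : IsDlubpo termD.{u} := by
  refine ⟨fun A a (hA : A = {a}) => ?_, fun a => rfl⟩
  subst hA
  exact ⟨Dir.singleton a, isLUB_singleton⟩

lemma s5ax_termD : S5ax termD.{u} := by
  intro X Y y hXY hX _ (hY : Y = {y}) _
  subst hY
  exact Set.eq_singleton_iff_nonempty_unique_mem.2 ⟨hX.1, fun _ hx => hXY hx⟩

lemma existsUnique_hom_termD {C : PreDlubpo.{u}} (hC : IsDlubpo C) :
    ∃! f : C.carrier → termD.{u}.carrier, Hom C termD f := by
  refine ⟨fun _ => PUnit.unit, ⟨fun _ _ _ => le_rfl, fun A a hA => ?_⟩,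
    fun _ _ => rfl⟩
  exact (hC.dir hA).1.image_const PUnit.unit

section Product

variable {D E : PreDlubpo.{u}}

lemma prodD_conv_prod (hD : IsDlubpo D) (hE : IsDlubpo E) {S : Set D.carrier}
    {T : Set E.carrier} {s : D.carrier} {t : E.carrier} (hS : D.conv S s) (hT : E.conv T t) :
    (prodD D E).conv (S ×ˢ T) (s, t) := by
  have hS' := hD.dir hS
  have hT' := hE.dir hT
  refine ⟨hS'.prod hT', ?_, ?_⟩
  · rwa [Set.fst_image_prod S hT'.1]
  · rwa [Set.snd_image_prod hS'.1 T]

lemma isDlubpo_prodD (hD : IsDlubpo D) (hE : IsDlubpo E) : IsDlubpo (prodD D E) := by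
  refine ⟨fun A p ⟨hA, h1, h2⟩ => ⟨hA, isLUB_prod.2 ⟨hD.isLUB h1, hE.isLUB h2⟩⟩,
    fun p => ?_⟩
  have := prodD_conv_prod hD hE (hD.conv_singleton p.1) (hE.conv_singleton p.2)
  rwa [Set.singleton_prod_singleton] at this

lemma s5ax_prodD (sD : S5ax D) (sE : S5ax E) : S5ax (prodD D E) := by
  rintro X Y y hXY hX hY ⟨-, h1, h2⟩ hYX
  exact ⟨hX,
    sD _ _ _ (Set.image_mono hXY) (hX.image monotone_fst) (hY.image monotone_fst) h1
      (IsCofinalFor.image_of_monotone hYX monotone_fst),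
    sE _ _ _ (Set.image_mono hXY) (hX.image monotone_snd) (hY.image monotone_snd) h2
      (IsCofinalFor.image_of_monotone hYX monotone_snd)⟩

lemma hom_fst : Hom (prodD D E) D Prod.fst :=
  ⟨monotone_fst, fun _ _ h => h.2.1⟩

lemma hom_snd : Hom (prodD D E) E Prod.snd :=
  ⟨monotone_snd, fun _ _ h => h.2.2⟩

lemma hom_prodMk {C : PreDlubpo.{u}} (hC : IsDlubpo C) {f : C.carrier → D.carrier}
    {g : C.carrier → E.carrier} (hf : Hom C D f) (hg : Hom C E g) :
    Hom C (prodD D E) (fun c => (f c, g c)) := by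
  have hmono : Monotone (fun c => (f c, g c)) := hf.1.prodMk hg.1
  refine ⟨hmono, fun A a hA => ⟨(hC.dir hA).image hmono, ?_, ?_⟩⟩
  · show D.conv (Prod.fst '' ((fun c => (f c, g c)) '' A)) (f a)
    rw [Set.image_image]
    exact hf.2 A a hA
  · show E.conv (Prod.snd '' ((fun c => (f c, g c)) '' A)) (g a)
    rw [Set.image_image]
    exact hg.2 A a hA

lemma existsUnique_hom_prodD {C : PreDlubpo.{u}} (hC : IsDlubpo C) {f : C.carrier → D.carrier}
    {g : C.carrier → E.carrier} (hf : Hom C D f) (hg : Hom C E g) :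
    ∃! h : C.carrier → (prodD D E).carrier,
      Hom C (prodD D E) h ∧ Prod.fst ∘ h = f ∧ Prod.snd ∘ h = g := by
  refine ⟨fun c => (f c, g c), ⟨hom_prodMk hC hf hg, rfl, rfl⟩, ?_⟩
  rintro h ⟨-, rfl, rfl⟩
  rfl

end Product

section Exponent

variable {D E : PreDlubpo.{u}}

def evalD (D E : PreDlubpo.{u}) : (expoD D E).carrier × D.carrier → E.carrier :=
  fun p => p.1.1 p.2

lemma monotone_evalD : Monotone (evalD D E) :=
  fun p q h => (h.1 p.2).trans (q.1.2.1 h.2)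

lemma expoD_conv_of_forall {F : Set (expoD D E).carrier} {f : (expoD D E).carrier} (hF : Dir F)
    (h : ∀ A : Set ((expoD D E).carrier × D.carrier), Dir A → Prod.fst '' A = F →
      ∀ d, D.conv (Prod.snd '' A) d → E.conv (evalD D E '' A) (f.1 d)) :
    (expoD D E).conv F f :=
  ⟨hF, h⟩

lemma conv_evalD_image_of_expoD_conv {F : Set (expoD D E).carrier} {f : (expoD D E).carrier}
    (h : (expoD D E).conv F f) {A : Set ((expoD D E).carrier × D.carrier)} (hA : Dir A)
    (hAF : Prod.fst '' A = F) {d : D.carrier} (hd : D.conv (Prod.snd '' A) d) :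
    E.conv (evalD D E '' A) (f.1 d) :=
  h.2 A hA hAF d hd

lemma conv_evalD_image_prod_of_expoD_conv {F : Set (expoD D E).carrier} {f : (expoD D E).carrier}
    (h : (expoD D E).conv F f) {T : Set D.carrier} (hT : Dir T) {d : D.carrier}
    (hd : D.conv T d) : E.conv (evalD D E '' (F ×ˢ T)) (f.1 d) := by
  have hF : Dir F := h.1
  refine conv_evalD_image_of_expoD_conv h (hF.prod hT) (Set.fst_image_prod F hT.1) ?_
  rwa [Set.snd_image_prod hF.1]

lemma conv_image_apply_of_expoD_conv (hD : IsDlubpo D) {F : Set (expoD D E).carrier}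
    {f : (expoD D E).carrier} (h : (expoD D E).conv F f) (d : D.carrier) :
    E.conv ((fun g : (expoD D E).carrier => g.1 d) '' F) (f.1 d) := by
  have himage : evalD D E '' (F ×ˢ {d}) = (fun g : (expoD D E).carrier => g.1 d) '' F :=
    (Set.image_prod fun (g : (expoD D E).carrier) x => g.1 x).trans Set.image2_singleton_right
  exact himage ▸ conv_evalD_image_prod_of_expoD_conv h (Dir.singleton d) (hD.conv_singleton d)

lemma isDlubpo_expoD (hD : IsDlubpo D) (hE : IsDlubpo E) : IsDlubpo (expoD D E) := by
  refine ⟨fun F f h => ⟨h.1, ?_⟩, fun f => expoD_conv_of_forall (Dir.singleton f) ?_⟩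
  · have hlub d := hE.isLUB (conv_image_apply_of_expoD_conv hD h d)
    refine ⟨fun g hg d => (hlub d).1 ⟨g, hg, rfl⟩, fun k hk d => (hlub d).2 ?_⟩
    rintro _ ⟨g, hg, rfl⟩
    exact hk hg d
  · intro A _ hA d hd
    have hfst : ∀ p ∈ A, p.1 = f := fun p hp => hA.subset ⟨p, hp, rfl⟩
    have : evalD D E '' A = f.1 '' (Prod.snd '' A) := by
      rw [Set.image_image]
      exact Set.image_congr fun p hp => by rw [evalD, hfst p hp]
    rw [this]
    exact f.2.2 _ _ hd

lemma conv_evalD_image_of_isCofinalFor (sE : S5ax E)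
    {A : Set ((expoD D E).carrier × D.carrier)} (hA : Dir A)
    {Y : Set (expoD D E).carrier} (hY : Dir Y) (hAY : Prod.fst '' A ⊆ Y)
    (hYA : IsCofinalFor Y (Prod.fst '' A)) {e : E.carrier}
    (he : E.conv (evalD D E '' (Y ×ˢ (Prod.snd '' A))) e) : E.conv (evalD D E '' A) e := by
  have hsub : A ⊆ Y ×ˢ (Prod.snd '' A) :=
    fun p hp => ⟨hAY ⟨p, hp, rfl⟩, ⟨p, hp, rfl⟩⟩
  have hcof : IsCofinalFor (Y ×ˢ (Prod.snd '' A)) A :=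
    (hYA.prod IsCofinalFor.rfl).trans hA.2.isCofinalFor_fst_image_prod_snd_image
  exact sE _ _ _ (Set.image_mono hsub) (hA.image monotone_evalD)
    ((hY.prod (hA.image monotone_snd)).image monotone_evalD) he
    (hcof.image_of_monotone monotone_evalD)

lemma s5ax_expoD (sE : S5ax E) : S5ax (expoD D E) := by
  intro X Y g hXY hX hY hYg hYX
  refine expoD_conv_of_forall hX fun A hA hAX d hd => ?_
  exact conv_evalD_image_of_isCofinalFor sE hA hY (hAX ▸ hXY) (hAX ▸ hYX)
    (conv_evalD_image_prod_of_expoD_conv hYg (hA.image monotone_snd) hd)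

lemma hom_evalD : Hom (prodD (expoD D E) D) E (evalD D E) :=
  ⟨monotone_evalD, fun _ _ ⟨hA, hfst, hsnd⟩ =>
    conv_evalD_image_of_expoD_conv hfst hA rfl hsnd⟩

end Exponent

section Curry

variable {C D E : PreDlubpo.{u}} {f : (prodD C D).carrier → E.carrier}

lemma Hom.curry_apply (hC : IsDlubpo C) (hD : IsDlubpo D) (hf : Hom (prodD C D) E f)
    (c : C.carrier) : Hom D E (fun d => f (c, d)) := by
  refine ⟨fun _ _ h => hf.1 ⟨le_rfl, h⟩, fun A a hA => ?_⟩
  have himage : f '' ({c} ×ˢ A) = (fun d => f (c, d)) '' A :=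
    (Set.image_prod fun c' d => f (c', d)).trans Set.image2_singleton_left
  exact himage ▸ hf.2 _ _ (prodD_conv_prod hC hD (hC.conv_singleton c) hA)

def curryD (hC : IsDlubpo C) (hD : IsDlubpo D) (hf : Hom (prodD C D) E f) :
    C.carrier → (expoD D E).carrier :=
  fun c => ⟨fun d => f (c, d), hf.curry_apply hC hD c⟩

variable (hC : IsDlubpo C) (hD : IsDlubpo D) (hf : Hom (prodD C D) E f)

lemma monotone_curryD : Monotone (curryD hC hD hf) :=
  fun _ _ h _ => hf.1 ⟨h, le_rfl⟩

lemma evalD_image_curryD_image_prod (S : Set C.carrier) (T : Set D.carrier) :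
    evalD D E '' ((curryD hC hD hf '' S) ×ˢ T) = f '' (S ×ˢ T) :=
  (Set.image_prod _).trans
    ((Set.image2_image_left _ _).trans (Set.image_prod fun c d => f (c, d)).symm)

lemma hom_curryD (sE : S5ax E) : Hom C (expoD D E) (curryD hC hD hf) := by
  refine ⟨monotone_curryD hC hD hf, fun S s hS => ?_⟩
  refine expoD_conv_of_forall ((hC.dir hS).image (monotone_curryD hC hD hf)) fun A hA hAS d hd => ?_
  have hfS := hf.2 _ _ (prodD_conv_prod hC hD hS hd)
  rw [← evalD_image_curryD_image_prod hC hD hf, ← hAS] at hfS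
  exact conv_evalD_image_of_isCofinalFor sE hA (hA.image monotone_fst) subset_rfl
    IsCofinalFor.rfl hfS

end Curry

lemma existsUnique_hom_curry {C D E : PreDlubpo.{u}} {f : (prodD C D).carrier → E.carrier}
    (hC : IsDlubpo C) (hD : IsDlubpo D) (hf : Hom (prodD C D) E f) (sE : S5ax E) :
    ∃! h : C.carrier → (expoD D E).carrier,
      Hom C (expoD D E) h ∧ ∀ (c : C.carrier) (d : D.carrier), (h c).1 d = f (c, d) := by
  refine ⟨curryD hC hD hf, ⟨hom_curryD hC hD hf sE, fun _ _ => rfl⟩, ?_⟩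
  rintro h ⟨-, hh⟩
  funext c
  exact Subtype.ext (funext (hh c))

/-- The full subcategory of dlubpos satisfying axiom S5 is cartesian closed:
the one-point dlubpo is terminal, componentwise products are categorical
products, and the general function dlubpos `D ⇒* E` are exponents. -/
theorem stmt8 :
    -- terminal object
    (IsDlubpo termD.{u} ∧ S5ax termD.{u} ∧
      ∀ C : PreDlubpo.{u}, IsDlubpo C → S5ax C →
        ∃! f : C.carrier → termD.{u}.carrier, Hom C termD f) ∧
    -- binary products
    (∀ D E : PreDlubpo.{u}, IsDlubpo D → S5ax D → IsDlubpo E → S5ax E →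
      IsDlubpo (prodD D E) ∧ S5ax (prodD D E) ∧
      Hom (prodD D E) D Prod.fst ∧ Hom (prodD D E) E Prod.snd ∧
      ∀ C : PreDlubpo.{u}, IsDlubpo C → S5ax C →
        ∀ (f : C.carrier → D.carrier) (g : C.carrier → E.carrier),
          Hom C D f → Hom C E g →
          ∃! h : C.carrier → (prodD D E).carrier,
            Hom C (prodD D E) h ∧ Prod.fst ∘ h = f ∧ Prod.snd ∘ h = g) ∧
    -- exponents
    (∀ D E : PreDlubpo.{u}, IsDlubpo D → S5ax D → IsDlubpo E → S5ax E →
      IsDlubpo (expoD D E) ∧ S5ax (expoD D E) ∧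
      Hom (prodD (expoD D E) D) E (fun p => p.1.1 p.2) ∧
      ∀ C : PreDlubpo.{u}, IsDlubpo C → S5ax C →
        ∀ f : (prodD C D).carrier → E.carrier, Hom (prodD C D) E f →
          ∃! h : C.carrier → (expoD D E).carrier,
            Hom C (expoD D E) h ∧ ∀ (c : C.carrier) (d : D.carrier),
              (h c).1 d = f (c, d)) :=
  ⟨⟨isDlubpo_termD, s5ax_termD, fun _ hC _ => existsUnique_hom_termD hC⟩,
    fun _ _ hD sD hE sE => ⟨isDlubpo_prodD hD hE, s5ax_prodD sD sE, hom_fst, hom_snd,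
      fun _ hC _ _ _ hf hg => existsUnique_hom_prodD hC hf hg⟩,
    fun _ _ hD _ hE sE => ⟨isDlubpo_expoD hD hE, s5ax_expoD sE, hom_evalD,
      fun _ hC _ _ hf => existsUnique_hom_curry hC hD hf sE⟩⟩
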